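/- For 1 ≤ s < t < ∞, if an infinite connected locally finite weighted graph (V, μ) is L^s-parabolic, then it is L^t-parabolic. -/

import Mathlib

/-!
By the maximum principle `g(x,y) ≤ g(y,y)`, the potential `Gf` of a density `f` supported on a
finite set `K` is bounded by `∑_{y ∈ K} Gf(y)`, which is finite when `‖Gf‖_{t'} ≤ 1`. Hence
a small positive multiple `c f` has potential at most `1` everywhere, and then
`(cGf)^{s'} ≤ (cGf)^{t'}` because `t' ≤ s'`. So `c f` is admissible for `C_s(K) = 0`, which
forces `c ν(K) = 0`, i.e. `ν(K) = 0`.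
-/

open scoped ENNReal

/-- Vertex weight `μ(x) = ∑_y μ_{xy}` of a weighted graph. -/
noncomputable def vertexWeight {V : Type*} (μ : V → V → ℝ≥0∞) (x : V) : ℝ≥0∞ := ∑' y, μ x y

/-- Transition kernel `P(x,y) = μ_{xy}/μ(x)` of the random walk. -/
noncomputable def transKer {V : Type*} (μ : V → V → ℝ≥0∞) (x y : V) : ℝ≥0∞ :=
  μ x y / vertexWeight μ x

open Classical in
/-- Transition kernel of the walk killed on exiting `U`. -/
noncomputable def killedKer {V : Type*} (μ : V → V → ℝ≥0∞) (U : Set V) (x y : V) : ℝ≥0∞ :=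
  if x ∈ U ∧ y ∈ U then transKer μ x y else 0

open Classical in
/-- `n`-step iterates `P^U_n` of the killed kernel, with `P^U_0 = I_U`. -/
noncomputable def killedKerN {V : Type*} (μ : V → V → ℝ≥0∞) (U : Set V) : ℕ → V → V → ℝ≥0∞
  | 0 => fun x y => if x = y ∧ x ∈ U then 1 else 0
  | n + 1 => fun x y => ∑' z, killedKer μ U x z * killedKerN μ U n z y

/-- Killed Green function `g^U(x,y) = ∑_n P^U_n(x,y)/μ(y)`. -/
noncomputable def greenKilled {V : Type*} (μ : V → V → ℝ≥0∞) (U : Set V) (x y : V) : ℝ≥0∞ :=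
  ∑' n, killedKerN μ U n x y / vertexWeight μ y

/-- Green function `g(x,y) = ∑_n pₙ(x,y)` of the graph. -/
noncomputable def green {V : Type*} (μ : V → V → ℝ≥0∞) (x y : V) : ℝ≥0∞ :=
  greenKilled μ Set.univ x y

/-- Killed Green operator `G^U f(x) = ∑_{y∈U} g^U(x,y) f(y) μ(y)`. -/
noncomputable def greenOp {V : Type*} (μ : V → V → ℝ≥0∞) (U : Set V) (f : V → ℝ≥0∞) (x : V) :
    ℝ≥0∞ :=
  ∑' y, greenKilled μ U x y * f y * vertexWeight μ y

/-- The `L^q`-Green function `g_q(x,y) = ∑_z g(x,z) g(z,y)^{q-1} μ(z)`. -/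
noncomputable def greenQ {V : Type*} (μ : V → V → ℝ≥0∞) (q : ℝ) (x y : V) : ℝ≥0∞ :=
  ∑' z, green μ x z * green μ z y ^ (q - 1) * vertexWeight μ z

/-- The `μ`-weighted `L^q(U)` norm. -/
noncomputable def lqNorm {V : Type*} (μ : V → V → ℝ≥0∞) (U : Set V) (q : ℝ) (h : V → ℝ≥0∞) :
    ℝ≥0∞ :=
  (∑' x, U.indicator (fun x => h x ^ q * vertexWeight μ x) x) ^ (1 / q)

/-- The `L^p`-capacity `C_p(K,U)`:
`sup { ν(K)^p : ν = fμ, f ∈ ℓ⁺(K), ‖G^U f‖_{L^q(U)} ≤ 1 }`, `1/p + 1/q = 1`. -/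
noncomputable def lpCap {V : Type*} (μ : V → V → ℝ≥0∞) (p q : ℝ) (K : Finset V) (U : Set V) :
    ℝ≥0∞ :=
  ⨆ f ∈ {f : V → ℝ≥0∞ | (∀ x, x ∉ K → f x = 0) ∧ lqNorm μ U q (greenOp μ U f) ≤ 1},
    (∑ x ∈ K, f x * vertexWeight μ x) ^ p

/-- A weighted graph is locally finite if every vertex has finitely many neighbours. -/
def LocallyFinite' {V : Type*} (μ : V → V → ℝ≥0∞) : Prop :=
  ∀ x, (Function.support (μ x)).Finite

open Classical in
/-- The `μ`-weighted `L^q` norm on `V` for an extended exponent `q ∈ (1,∞]`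
(with the supremum norm when `q = ∞`). -/
noncomputable def lqNormE {V : Type*} (μ : V → V → ℝ≥0∞) (q : ℝ≥0∞) (h : V → ℝ≥0∞) : ℝ≥0∞ :=
  if q = ⊤ then ⨆ x, h x
  else (∑' x, h x ^ q.toReal * vertexWeight μ x) ^ (1 / q.toReal)

/-- The `L^p`-capacity `C_p(K) = sup{ν(K)^p : ν = fμ, f ∈ ℓ⁺(K), ‖Gf‖_{L^q(V)} ≤ 1}`,
where `q ∈ (1,∞]` is the Hölder conjugate of `p`. -/
noncomputable def lpCapE {V : Type*} (μ : V → V → ℝ≥0∞) (p : ℝ) (q : ℝ≥0∞) (K : Finset V) :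
    ℝ≥0∞ :=
  ⨆ f ∈ {f : V → ℝ≥0∞ | (∀ x, x ∉ K → f x = 0) ∧
      lqNormE μ q (greenOp μ Set.univ f) ≤ 1},
    (∑ x ∈ K, f x * vertexWeight μ x) ^ p

open Finset in
lemma ENNReal.tsum_mul_tsum_eq_tsum_sum_range (f g : ℕ → ℝ≥0∞) :
    (∑' n, f n) * ∑' n, g n = ∑' n, ∑ k ∈ range (n + 1), f k * g (n - k) := by
  simp_rw [← Nat.sum_antidiagonal_eq_sum_range_succ fun k l ↦ f k * g l, ← Finset.tsum_subtype]
  rw [← ENNReal.tsum_mul_right]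
  simp_rw [← ENNReal.tsum_mul_left]
  rw [← ENNReal.tsum_prod, ← HasAntidiagonal.sigmaAntidiagonalEquivProd.tsum_eq,
    ENNReal.tsum_sigma']
  rfl

section GreenFunction

open Classical

variable {V : Type*} (μ : V → V → ℝ≥0∞)

@[simp]
lemma killedKerN_univ_zero (x y : V) :
    killedKerN μ Set.univ 0 x y = if x = y then 1 else 0 := by
  simp [killedKerN]

lemma killedKerN_univ_succ (n : ℕ) (x y : V) :
    killedKerN μ Set.univ (n + 1) x y = ∑' z, transKer μ x z * killedKerN μ Set.univ n z y := by
  simp [killedKerN, killedKer]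

lemma tsum_transKer_le_one (x : V) : ∑' z, transKer μ x z ≤ 1 := by
  simp only [transKer, div_eq_mul_inv, ENNReal.tsum_mul_right]
  exact ENNReal.div_self_le_one

/-- `firstHit μ y n x` is the probability that the walk started at `x` first visits `y` at
time `n`. -/
noncomputable def firstHit (y : V) : ℕ → V → ℝ≥0∞
  | 0 => fun x => if x = y then 1 else 0
  | n + 1 => fun x => if x = y then 0 else ∑' z, transKer μ x z * firstHit y n z

lemma sum_range_firstHit_le_one (y : V) (N : ℕ) (x : V) :
    ∑ k ∈ Finset.range N, firstHit μ y k x ≤ 1 := by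
  induction N generalizing x with
  | zero => simp
  | succ N ih =>
    rw [Finset.sum_range_succ']
    by_cases hxy : x = y
    · simp [firstHit, hxy]
    · simp only [firstHit, hxy, if_false, add_zero]
      calc ∑ k ∈ Finset.range N, ∑' z, transKer μ x z * firstHit μ y k z
          = ∑' z, transKer μ x z * ∑ k ∈ Finset.range N, firstHit μ y k z := by
            rw [← Summable.tsum_finsetSum fun _ _ => ENNReal.summable]
            simp_rw [Finset.mul_sum]
        _ ≤ ∑' z, transKer μ x z :=
            ENNReal.tsum_le_tsum fun z => mul_le_of_le_one_right' (ih z)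
        _ ≤ 1 := tsum_transKer_le_one μ x

lemma tsum_firstHit_le_one (y x : V) : ∑' k, firstHit μ y k x ≤ 1 :=
  ENNReal.tsum_le_of_sum_range_le (sum_range_firstHit_le_one μ y · x)

lemma killedKerN_univ_eq_sum_firstHit (y : V) (n : ℕ) (x : V) :
    killedKerN μ Set.univ n x y
      = ∑ k ∈ Finset.range (n + 1), firstHit μ y k x * killedKerN μ Set.univ (n - k) y y := by
  induction n generalizing x with
  | zero => simp [firstHit]
  | succ n ih =>
    rw [Finset.sum_range_succ']
    by_cases hxy : x = y
    · simp [firstHit, hxy]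
    · simp only [firstHit, hxy, if_false, zero_mul, add_zero, Nat.add_sub_add_right]
      calc killedKerN μ Set.univ (n + 1) x y
          = ∑' z, ∑ k ∈ Finset.range (n + 1),
              transKer μ x z * (firstHit μ y k z * killedKerN μ Set.univ (n - k) y y) := by
            simp_rw [killedKerN_univ_succ, ih, Finset.mul_sum]
        _ = ∑ k ∈ Finset.range (n + 1),
              (∑' z, transKer μ x z * firstHit μ y k z) * killedKerN μ Set.univ (n - k) y y := by
            rw [Summable.tsum_finsetSum fun _ _ => ENNReal.summable]
            simp_rw [← mul_assoc, ENNReal.tsum_mul_right]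

/-- A walk from `x` to `y` splits at its first visit to `y` into a first passage, of total
probability at most `1`, and a loop at `y`. -/
lemma green_le_green_self (x y : V) : green μ x y ≤ green μ y y := by
  simp only [green, greenKilled, div_eq_mul_inv, ENNReal.tsum_mul_right]
  gcongr ?_ * _
  calc ∑' n, killedKerN μ Set.univ n x y
      = (∑' k, firstHit μ y k x) * ∑' m, killedKerN μ Set.univ m y y := by
        rw [ENNReal.tsum_mul_tsum_eq_tsum_sum_range]
        simp_rw [killedKerN_univ_eq_sum_firstHit μ y _ x]
    _ ≤ ∑' m, killedKerN μ Set.univ m y y :=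
        mul_le_of_le_one_left' (tsum_firstHit_le_one μ y x)

end GreenFunction

section Capacity

variable {V : Type*} (μ : V → V → ℝ≥0∞)

lemma lqNormE_mono {q : ℝ≥0∞} {h h' : V → ℝ≥0∞} (hle : h ≤ h') :
    lqNormE μ q h ≤ lqNormE μ q h' := by
  unfold lqNormE
  split_ifs
  · exact iSup_mono hle
  · gcongr with x
    exact hle x

lemma lqNormE_le_one_iff {q : ℝ≥0∞} (hq0 : q ≠ 0) (hq : q ≠ ⊤) {h : V → ℝ≥0∞} :
    lqNormE μ q h ≤ 1 ↔ ∑' x, h x ^ q.toReal * vertexWeight μ x ≤ 1 := by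
  have hpos : 0 < 1 / q.toReal := by simpa using ENNReal.toReal_pos hq0 hq
  rw [lqNormE, if_neg hq]
  conv_rhs => rw [← ENNReal.rpow_le_rpow_iff hpos, ENNReal.one_rpow]

lemma ne_top_of_lqNormE_le_one {q : ℝ≥0∞} (hq0 : q ≠ 0) (hq : q ≠ ⊤) {h : V → ℝ≥0∞} {x : V}
    (hx : vertexWeight μ x ≠ 0) (hh : lqNormE μ q h ≤ 1) : h x ≠ ⊤ := by
  intro htop
  have hterm := (ENNReal.le_tsum x).trans ((lqNormE_le_one_iff μ hq0 hq).1 hh)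
  rw [htop, ENNReal.top_rpow_of_pos (ENNReal.toReal_pos hq0 hq), ENNReal.top_mul hx] at hterm
  exact ENNReal.one_ne_top (top_le_iff.1 hterm)

/-- Below height `1`, raising the exponent only shrinks `h ^ q`. -/
lemma lqNormE_le_one_of_le_one {q q' : ℝ≥0∞} (hq0 : q ≠ 0) (hq : q ≠ ⊤) (hqq' : q ≤ q')
    {h : V → ℝ≥0∞} (h1 : ∀ x, h x ≤ 1) (hh : lqNormE μ q h ≤ 1) : lqNormE μ q' h ≤ 1 := by
  by_cases hq' : q' = ⊤
  · rw [lqNormE, if_pos hq']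
    exact iSup_le h1
  rw [lqNormE_le_one_iff μ (ne_bot_of_le_ne_bot hq0 hqq') hq']
  calc ∑' x, h x ^ q'.toReal * vertexWeight μ x
      ≤ ∑' x, h x ^ q.toReal * vertexWeight μ x :=
        ENNReal.tsum_le_tsum fun x => mul_le_mul_left
          (ENNReal.rpow_le_rpow_of_exponent_ge (h1 x) (ENNReal.toReal_mono hq' hqq')) _
    _ ≤ 1 := (lqNormE_le_one_iff μ hq0 hq).1 hh

lemma greenOp_const_mul (U : Set V) (c : ℝ≥0∞) (f : V → ℝ≥0∞) :
    greenOp μ U (fun x => c * f x) = fun x => c * greenOp μ U f x := by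
  ext x
  simp only [greenOp, ← ENNReal.tsum_mul_left]
  refine tsum_congr fun y => ?_
  ring

lemma greenOp_le_sum_greenOp {K : Finset V} {f : V → ℝ≥0∞} (hf : ∀ x ∉ K, f x = 0) (x : V) :
    greenOp μ Set.univ f x ≤ ∑ y ∈ K, greenOp μ Set.univ f y := by
  rw [greenOp, tsum_eq_sum fun y hy => by simp [hf y hy]]
  gcongr with y
  calc greenKilled μ Set.univ x y * f y * vertexWeight μ y
      ≤ green μ y y * f y * vertexWeight μ y := by gcongr; exact green_le_green_self μ x y
    _ ≤ greenOp μ Set.univ f y :=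
        ENNReal.le_tsum (f := fun z => greenKilled μ Set.univ y z * f z * vertexWeight μ z) y

lemma lpCapE_eq_zero_iff {p : ℝ} (hp : 0 < p) (q : ℝ≥0∞) (K : Finset V) :
    lpCapE μ p q K = 0 ↔ ∀ f : V → ℝ≥0∞, (∀ x ∉ K, f x = 0) →
      lqNormE μ q (greenOp μ Set.univ f) ≤ 1 → ∑ x ∈ K, f x * vertexWeight μ x = 0 := by
  simp [lpCapE, ENNReal.iSup_eq_zero, ENNReal.rpow_eq_zero_iff_of_pos hp]

/-- The maximum principle bounds the potential by `∑_{y ∈ K} Gf(y)`, so a small multiple of `f`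
has potential at most `1`. -/
lemma exists_const_mul_admissible (hpos : ∀ x, vertexWeight μ x ≠ 0) {q q' : ℝ≥0∞}
    (hq0 : q ≠ 0) (hq : q ≠ ⊤) (hqq' : q ≤ q') {K : Finset V} {f : V → ℝ≥0∞}
    (hf : ∀ x ∉ K, f x = 0) (hGf : lqNormE μ q (greenOp μ Set.univ f) ≤ 1) :
    ∃ c ≠ 0, lqNormE μ q' (greenOp μ Set.univ fun x => c * f x) ≤ 1 := by
  set M := ∑ y ∈ K, greenOp μ Set.univ f y
  have hM : M ≠ ⊤ := ENNReal.sum_ne_top.2 fun y _ => ne_top_of_lqNormE_le_one μ hq0 hq (hpos y) hGf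
  refine ⟨min 1 M⁻¹, (lt_min one_pos (ENNReal.inv_pos.2 hM)).ne', ?_⟩
  rw [greenOp_const_mul]
  refine lqNormE_le_one_of_le_one μ hq0 hq hqq' (fun x => ?_)
    ((lqNormE_mono μ fun x => mul_le_of_le_one_left' (min_le_left _ _)).trans hGf)
  calc min 1 M⁻¹ * greenOp μ Set.univ f x ≤ M⁻¹ * M :=
        mul_le_mul' (min_le_right _ _) (greenOp_le_sum_greenOp μ hf x)
    _ ≤ 1 := ENNReal.inv_mul_le_one M

end Capacity

open Classical in
theorem lsParabolic_implies_ltParabolic_general {V : Type*}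
    (μ : V → V → ℝ≥0∞)
    (hpos : ∀ x, 0 < vertexWeight μ x)
    (s t : ℝ) (hs : 1 ≤ s) (hst : s < t)
    (s' t' : ℝ≥0∞)
    (hs' : s' = if s = 1 then ⊤ else ENNReal.ofReal (s / (s - 1)))
    (ht' : t' = ENNReal.ofReal (t / (t - 1)))
    (hpar : ∀ K : Finset V, lpCapE μ s s' K = 0) :
    ∀ K : Finset V, lpCapE μ t t' K = 0 := by
  intro K
  have ht : 1 < t := hs.trans_lt hst
  have ht'0 : t' ≠ 0 := by
    rw [ht', ne_eq, ENNReal.ofReal_eq_zero, not_le]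
    exact div_pos (by linarith) (by linarith)
  have ht's' : t' ≤ s' := by
    rw [hs', ht']
    split_ifs with hs1
    · exact le_top
    · have hs1 : 1 < s := hs.lt_of_ne' hs1
      gcongr ENNReal.ofReal ?_
      rw [div_le_div_iff₀ (by linarith) (by linarith)]
      linarith
  rw [lpCapE_eq_zero_iff μ (by linarith)]
  intro f hfK hf
  obtain ⟨c, hc, hcf⟩ := exists_const_mul_admissible μ (fun x => (hpos x).ne') ht'0
    (ht' ▸ ENNReal.ofReal_ne_top) ht's' hfK hf
  have hcsum := (lpCapE_eq_zero_iff μ (by linarith) s' K).1 (hpar K) _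
    (fun x hx => by simp [hfK x hx]) hcf
  simp_rw [mul_assoc, ← Finset.mul_sum] at hcsum
  exact (mul_eq_zero.1 hcsum).resolve_left hc

open Classical in
/-- for `1 ≤ s < t < ∞`, if an infinite connected locally finite
weighted graph is `L^s`-parabolic then it is `L^t`-parabolic. -/
theorem lsParabolic_implies_ltParabolic {V : Type*} [Infinite V]
    (μ : V → V → ℝ≥0∞)
    (hsym : ∀ x y, μ x y = μ y x)
    (hloc : LocallyFinite' μ)
    (hpos : ∀ x, 0 < vertexWeight μ x)
    (hfin : ∀ x, vertexWeight μ x < ⊤)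
    (hconn : ∀ x y : V, ∃ n, 0 < killedKerN μ Set.univ n x y)
    (s t : ℝ) (hs : 1 ≤ s) (hst : s < t)
    (s' t' : ℝ≥0∞)
    (hs' : s' = if s = 1 then ⊤ else ENNReal.ofReal (s / (s - 1)))
    (ht' : t' = ENNReal.ofReal (t / (t - 1)))
    (hpar : ∀ K : Finset V, lpCapE μ s s' K = 0) :
    ∀ K : Finset V, lpCapE μ t t' K = 0 :=
  lsParabolic_implies_ltParabolic_general μ hpos s t hs hst s' t' hs' ht' hpar
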